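/- arXiv:2107.11752 — 3 statements merged into one kernel-verified Lean document; each statement's English description precedes it below -/
import Mathlib

section
/- Let R be an integral domain and let S be a nonempty finite subset of R. Then the following are equivalent: (a) Int(S,R) is a unique factorization domain; (b) Int(S,R) is a finite factorization domain; (c) Int(S,R) is a bounded factorization domain; (d) Int(S,R) is atomic; (e) R is a field. -/
open Polynomial

/-- The ring of integer-valued polynomials `Int(S, R)`, i.e. the subring of `K[x]`
(`K` the fraction field of `R`) of polynomials mapping `S` into (the image of) `R`. -/
def IntPoly (R : Type*) [CommRing R] [IsDomain R] (S : Set R) :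
    Subring (Polynomial (FractionRing R)) where
  carrier := {p : Polynomial (FractionRing R) |
    ∀ s ∈ S, p.eval (algebraMap R (FractionRing R) s) ∈ (algebraMap R (FractionRing R)).range}
  mul_mem' := by
    intro p q hp hq s hs
    simpa [Polynomial.eval_mul] using mul_mem (hp s hs) (hq s hs)
  one_mem' := by
    intro s hs
    simpa using one_mem (algebraMap R (FractionRing R)).range
  add_mem' := by
    intro p q hp hq s hs
    simpa [Polynomial.eval_add] using add_mem (hp s hs) (hq s hs)
  zero_mem' := by
    intro s hs
    simpa using zero_mem (algebraMap R (FractionRing R)).range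
  neg_mem' := by
    intro p hp s hs
    simpa [Polynomial.eval_neg] using neg_mem (hp s hs)

/-- An integral domain is atomic if every nonzero nonunit is a finite product of irreducibles. -/
def IsAtomicDomain (A : Type*) [CommRing A] : Prop :=
  ∀ x : A, x ≠ 0 → ¬IsUnit x →
    ∃ l : Multiset A, (∀ a ∈ l, Irreducible a) ∧ l.prod = x

/-- A ring satisfies the ACCP if every ascending chain of principal ideals stabilizes. -/
def SatisfiesACCP (A : Type*) [CommRing A] : Prop :=
  ∀ f : ℕ → Ideal A, (∀ n, (f n).IsPrincipal) → Monotone f →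
    ∃ N, ∀ n, N ≤ n → f n = f N

/-- Bounded factorization domain: atomic, and each nonzero nonunit has bounded
factorization lengths. -/
def IsBFD (A : Type*) [CommRing A] : Prop :=
  IsAtomicDomain A ∧ ∀ x : A, x ≠ 0 → ¬IsUnit x →
    ∃ N : ℕ, ∀ l : Multiset A, (∀ a ∈ l, Irreducible a) → l.prod = x → Multiset.card l ≤ N

/-- Finite factorization domain: atomic, and every nonzero element has finitely many
divisors up to associates. -/
def IsFFD (A : Type*) [CommRing A] : Prop :=
  IsAtomicDomain A ∧ ∀ x : A, x ≠ 0 → {y : Associates A | y ∣ Associates.mk x}.Finite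

/-- Strong finite factorization domain: every nonzero element has finitely many divisors. -/
def IsSFFD (A : Type*) [CommRing A] : Prop :=
  ∀ x : A, x ≠ 0 → {y : A | y ∣ x}.Finite

/-- Irreducible-finite domain: only finitely many irreducibles up to associates. -/
def IsIFD (A : Type*) [CommRing A] : Prop :=
  (Associates.mk '' {a : A | Irreducible a}).Finite

/-- Cohen–Kaplansky domain: atomic with finitely many irreducibles up to associates. -/
def IsCKD (A : Type*) [CommRing A] : Prop :=
  IsAtomicDomain A ∧ IsIFD A

/-- idf-domain: every nonzero element has finitely many irreducible divisors up to
associates. -/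
def IsIdfDomain (A : Type*) [CommRing A] : Prop :=
  ∀ x : A, x ≠ 0 → (Associates.mk '' {a : A | Irreducible a ∧ a ∣ x}).Finite

/-- Furstenberg domain: every nonzero nonunit has an irreducible divisor. -/
def IsFurstenberg (A : Type*) [CommRing A] : Prop :=
  ∀ x : A, x ≠ 0 → ¬IsUnit x → ∃ a : A, Irreducible a ∧ a ∣ x


section AuxGeneral

private theorem multiset_prod_map_pow {ι M : Type*} [CommMonoid M] (b : M) (f : ι → ℕ)
    (s : Multiset ι) : (s.map fun i => b ^ f i).prod = b ^ (s.map f).sum := by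
  induction s using Multiset.induction with
  | empty => simp
  | cons a t ih => simp [ih, pow_add]

variable {A : Type*} [CommRing A] [IsDomain A] [UniqueFactorizationMonoid A]

private def IsAtomicDomain' (A : Type*) [CommRing A] : Prop :=
  ∀ x : A, x ≠ 0 → ¬IsUnit x →
    ∃ l : Multiset A, (∀ a ∈ l, Irreducible a) ∧ l.prod = x

private theorem ufd_isAtomic : IsAtomicDomain' A := by
  intro x hx hxu
  obtain ⟨u, hu⟩ := (UniqueFactorizationMonoid.factors_prod hx)
  set f := UniqueFactorizationMonoid.factors x with hf
  have hfne : f ≠ 0 := by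
    intro h
    rw [h] at hu
    simp only [Multiset.prod_zero, one_mul] at hu
    exact hxu (hu ▸ u.isUnit)
  obtain ⟨a, ha⟩ := Multiset.exists_mem_of_ne_zero hfne
  obtain ⟨t, ht⟩ := Multiset.exists_cons_of_mem ha
  refine ⟨(a * u) ::ₘ t, ?_, ?_⟩
  · intro b hb
    rcases Multiset.mem_cons.mp hb with rfl | hb
    · exact (irreducible_mul_isUnit u.isUnit).mpr
        (UniqueFactorizationMonoid.irreducible_of_factor a ha)
    · exact UniqueFactorizationMonoid.irreducible_of_factor b
        (ht ▸ Multiset.mem_cons_of_mem hb)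
  · rw [Multiset.prod_cons, mul_comm (a : A) (u : A), mul_assoc, ← Multiset.prod_cons, ← ht, hf]
    rw [mul_comm] at hu
    exact hu

private theorem ufd_boundedLengths {x : A} (hx : x ≠ 0) (hxu : ¬IsUnit x) :
    ∃ N : ℕ, ∀ l : Multiset A, (∀ a ∈ l, Irreducible a) → l.prod = x →
      Multiset.card l ≤ N := by
  obtain ⟨l₀, hl₀, hl₀p⟩ := ufd_isAtomic x hx hxu
  refine ⟨Multiset.card l₀, fun l hl hlp => le_of_eq ?_⟩
  exact Multiset.card_eq_card_of_rel
    (UniqueFactorizationMonoid.factors_unique hl hl₀ (by rw [hlp, hl₀p]; exact Associated.refl _))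

private theorem ufd_finiteDvd {x : A} (hx : x ≠ 0) :
    {y : Associates A | y ∣ Associates.mk x}.Finite := by
  classical
  set fx := UniqueFactorizationMonoid.factors x with hfx
  have hsub : {y : Associates A | y ∣ Associates.mk x} ⊆
      (fun t : Multiset A => Associates.mk t.prod) '' {t | t ∈ fx.powerset} := by
    intro y hy
    obtain ⟨z, rfl⟩ := Associates.mk_surjective y
    have hzx : z ∣ x := Associates.mk_dvd_mk.mp hy
    obtain ⟨w, hw⟩ := hzx
    have hz0 : z ≠ 0 := by rintro rfl; exact hx (by simp [hw])
    have hw0 : w ≠ 0 := by rintro rfl; exact hx (by simp [hw])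
    have hrel : Multiset.Rel Associated
        (UniqueFactorizationMonoid.factors z + UniqueFactorizationMonoid.factors w) fx := by
      apply UniqueFactorizationMonoid.factors_unique
      · intro b hb
        rcases Multiset.mem_add.mp hb with hb | hb
        · exact UniqueFactorizationMonoid.irreducible_of_factor b hb
        · exact UniqueFactorizationMonoid.irreducible_of_factor b hb
      · exact fun b hb => UniqueFactorizationMonoid.irreducible_of_factor b hb
      · rw [Multiset.prod_add]
        have h1 : Associated ((UniqueFactorizationMonoid.factors z).prod *
            (UniqueFactorizationMonoid.factors w).prod) (z * w) :=
          Associated.mul_mul (UniqueFactorizationMonoid.factors_prod hz0)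
            (UniqueFactorizationMonoid.factors_prod hw0)
        rw [← hw] at h1
        exact h1.trans (UniqueFactorizationMonoid.factors_prod hx).symm
    obtain ⟨t, t', hrelz, hrelw, hsplit⟩ := Multiset.rel_add_left.mp hrel
    refine ⟨t, ?_, ?_⟩
    · exact Multiset.mem_powerset.mpr (hsplit ▸ Multiset.le_add_right t t')
    · have h1 : Associated (UniqueFactorizationMonoid.factors z).prod t.prod := by
        rw [← Associates.mk_eq_mk_iff_associated, ← Associates.prod_mk, ← Associates.prod_mk,
          Associates.rel_associated_iff_map_eq_map.mp hrelz]
      have h2 : Associated z t.prod := (UniqueFactorizationMonoid.factors_prod hz0).symm.trans h1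
      exact (Associates.mk_eq_mk_iff_associated.mpr h2).symm
  exact Set.Finite.subset (Set.Finite.image _ (fx.powerset).finite_toSet) hsub

end AuxGeneral

section IntPolyAux

variable {R : Type*} [CommRing R] [IsDomain R]

private theorem isUnit_of_const_unit (S : Set R) (hne : S.Nonempty) {r : R}
    (hmem : C (algebraMap R (FractionRing R) r) ∈ IntPoly R S)
    (h : IsUnit (⟨_, hmem⟩ : IntPoly R S)) : IsUnit r := by
  obtain ⟨s₀, hs₀⟩ := hne
  obtain ⟨u, hu⟩ := h
  have h1 : (⟨_, hmem⟩ : IntPoly R S) * ↑u⁻¹ = 1 := by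
    rw [← hu, Units.mul_inv]
  have h2 : C (algebraMap R (FractionRing R) r) *
      ((↑(u⁻¹ : (IntPoly R S)ˣ) : IntPoly R S) : Polynomial (FractionRing R)) = 1 := by
    have h2' := Subtype.ext_iff.mp h1
    push_cast at h2'
    exact h2'
  have h3 := congrArg (Polynomial.eval (algebraMap R (FractionRing R) s₀)) h2
  rw [eval_mul, eval_C, eval_one] at h3
  obtain ⟨v, hv⟩ := (↑(u⁻¹ : (IntPoly R S)ˣ) : IntPoly R S).2 s₀ hs₀
  rw [← hv] at h3
  refine IsUnit.of_mul_eq_one (a := r) v (IsFractionRing.injective R (FractionRing R) ?_)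
  rw [map_mul, map_one]
  exact h3

set_option maxHeartbeats 1000000 in
private theorem atomic_isUnit (S : Set R) (hne : S.Nonempty) (hfin : S.Finite)
    (hA : IsAtomicDomain (IntPoly R S)) {r : R} (hr0 : r ≠ 0) : IsUnit r := by
  by_contra hru
  classical
  let ι : R →+* FractionRing R := algebraMap R (FractionRing R)
  have hι : Function.Injective ι := IsFractionRing.injective R (FractionRing R)
  set Sf : Finset R := hfin.toFinset with hSf
  have hSfS : ∀ s, s ∈ Sf ↔ s ∈ S := fun s => hfin.mem_toFinset
  obtain ⟨s₀, hs₀⟩ := hne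
  have hs₀f : s₀ ∈ Sf := (hSfS s₀).mpr hs₀
  set m : ℕ := Sf.card with hm
  have hm1 : 1 ≤ m := Finset.card_pos.mpr ⟨s₀, hs₀f⟩
  let e : R ↪ FractionRing R := ⟨ι, hι⟩
  set f : Polynomial (FractionRing R) := ∏ s ∈ Sf, (X - C (ι s)) with hf
  have hfmonic : f.Monic := monic_prod_of_monic _ _ fun i _ => monic_X_sub_C _
  have hfne : f ≠ 0 := hfmonic.ne_zero
  have hfdeg : f.natDegree = m := by
    rw [hf, natDegree_prod _ _ fun i _ => X_sub_C_ne_zero _]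
    simp [hm]
  have hfeq : f = ∏ x ∈ Sf.map e, (X - C x) := by
    rw [Finset.prod_map Sf e fun k => X - C k]; rfl
  have hfroots : f.roots = (Sf.map e).val := by
    rw [hfeq]; exact roots_prod_X_sub_C _
  have hfeval : ∀ s ∈ S, f.eval (ι s) = 0 := by
    intro s hs
    rw [hf, eval_prod]
    exact Finset.prod_eq_zero ((hSfS s).mpr hs) (by simp)
  set D : R := ∏ a ∈ Sf, ∏ b ∈ Sf.erase a, (a - b) with hD
  have hD0 : D ≠ 0 := by
    rw [hD]
    refine Finset.prod_ne_zero_iff.mpr fun a _ => Finset.prod_ne_zero_iff.mpr fun b hb => ?_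
    exact sub_ne_zero.mpr (Finset.ne_of_mem_erase hb).symm
  have hιD : ι D ≠ 0 := fun h => hD0 (hι (by simpa using h))
  have hιr : ι r ≠ 0 := fun h => hr0 (hι (by simpa using h))
  set w : FractionRing R := ι r * ι D ^ m with hw
  have hw0 : w ≠ 0 := mul_ne_zero hιr (pow_ne_zero _ hιD)
  set g : Polynomial (FractionRing R) := C w⁻¹ * f with hg
  have hgmem : g ∈ IntPoly R S := by
    intro s hs
    have h0 : eval (algebraMap R (FractionRing R) s) g = 0 := by
      rw [hg, eval_mul, hfeval s hs, mul_zero]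
    rw [h0]
    exact zero_mem _
  have hg0 : g ≠ 0 := mul_ne_zero (by simpa using inv_ne_zero hw0) hfne
  have hgdeg : g.natDegree = m := by
    rw [hg, natDegree_C_mul (inv_ne_zero hw0), hfdeg]
  set G : IntPoly R S := ⟨g, hgmem⟩ with hG
  have hGne : G ≠ 0 := fun h => hg0 (by simpa [hG] using Subtype.ext_iff.mp h)
  have hGnu : ¬IsUnit G := by
    intro h
    obtain ⟨c, hc, hcg⟩ := Polynomial.isUnit_iff.mp (h.map (IntPoly R S).subtype)
    have hdg : g.natDegree = 0 := by
      rw [show g = C c from hcg.symm]; simp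
    rw [hgdeg] at hdg; omega
  obtain ⟨l, hlirr, hlprod⟩ := hA G hGne hGnu
  set L : Multiset (Polynomial (FractionRing R)) := l.map ((IntPoly R S).subtype) with hL
  have hLprod : L.prod = g := by
    rw [hL, ← map_multiset_prod ((IntPoly R S).subtype) l, hlprod]
    rfl
  have hL0 : (0 : Polynomial (FractionRing R)) ∉ L := by
    intro h0
    obtain ⟨x, hx, hx0⟩ := Multiset.mem_map.mp h0
    exact (hlirr x hx).ne_zero (Subtype.ext hx0)
  -- key pointwise claim
  have key : ∀ p ∈ L, p.leadingCoeff * ι D ^ (if p.natDegree = 0 then 0 else 1)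
      ∈ (algebraMap R (FractionRing R)).range := by
    intro p hp
    obtain ⟨π, hπl, rfl⟩ := Multiset.mem_map.mp hp
    have hπirr := hlirr π hπl
    set p : Polynomial (FractionRing R) := (IntPoly R S).subtype π with hpdef
    have hp0 : p ≠ 0 := fun h => hπirr.ne_zero (Subtype.ext h)
    by_cases hdeg : p.natDegree = 0
    · rw [if_pos hdeg, pow_zero, mul_one]
      have hc := Polynomial.eq_C_of_natDegree_eq_zero hdeg
      have hmem : eval (algebraMap R (FractionRing R) s₀) p
          ∈ (algebraMap R (FractionRing R)).range := π.2 s₀ hs₀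
      have hlcc : p.leadingCoeff = p.coeff 0 := by
        rw [Polynomial.leadingCoeff, hdeg]
      have heq : eval (algebraMap R (FractionRing R) s₀) p = p.coeff 0 := by
        conv_lhs => rw [hc]
        rw [eval_C]
      rw [hlcc]
      rwa [heq] at hmem
    · rw [if_neg hdeg, pow_one]
      -- step (a): find a non-root in S
      have ha : ∃ s ∈ Sf, p.eval (ι s) ≠ 0 := by
        by_contra hall
        push_neg at hall
        have hqmem : C (ι r)⁻¹ * p ∈ IntPoly R S := by
          intro s hs
          have h0 : p.eval (algebraMap R (FractionRing R) s) = 0 := hall s ((hSfS s).mpr hs)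
          rw [eval_mul, h0, mul_zero]
          exact zero_mem _
        have hrmem : C (algebraMap R (FractionRing R) r) ∈ IntPoly R S := by
          intro s hs
          rw [eval_C]
          exact ⟨r, rfl⟩
        have hfactor : π = (⟨_, hrmem⟩ : IntPoly R S) * ⟨_, hqmem⟩ := by
          apply Subtype.ext
          show p = C (ι r) * (C (ι r)⁻¹ * p)
          rw [← mul_assoc, ← C_mul, mul_inv_cancel₀ hιr, C_1, one_mul]
        rcases hπirr.isUnit_or_isUnit hfactor with hu | hu
        · exact hru (isUnit_of_const_unit S ⟨s₀, hs₀⟩ hrmem hu)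
        · obtain ⟨c, hc, hcq⟩ := Polynomial.isUnit_iff.mp (hu.map (IntPoly R S).subtype)
          have hdq : (C (ι r)⁻¹ * p).natDegree = 0 := by
            rw [show C (ι r)⁻¹ * p = C c from hcq.symm]; simp
          rw [natDegree_C_mul (inv_ne_zero hιr)] at hdq
          exact hdeg hdq
      obtain ⟨s, hsSf, hsne⟩ := ha
      -- step (b): p divides f in K[X]
      have hdvd : p ∣ f := by
        have h1 : π ∣ l.prod := Multiset.dvd_prod hπl
        rw [hlprod] at h1
        obtain ⟨c, hc⟩ := h1
        have h2 : p ∣ g := ⟨(IntPoly R S).subtype c, congrArg ((IntPoly R S).subtype) hc⟩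
        have h3 : f = C w * g := by
          rw [hg, ← mul_assoc, ← C_mul, mul_inv_cancel₀ hw0, C_1, one_mul]
        rw [h3]
        exact h2.mul_left (C w)
      have hfsplits : Splits f := by
        rw [hf]
        exact Splits.prod fun i _ => Splits.X_sub_C _
      have hsplit : Splits p :=
        Splits.of_dvd hfsplits hfne hdvd
      have hpfact := Splits.eq_prod_roots hsplit
      have hrle : p.roots ≤ f.roots := roots.le_of_dvd hfne hdvd
      have hsnr : e s ∉ p.roots := fun h => hsne ((mem_roots hp0).mp h)
      rw [hfroots] at hrle
      have hrle2 : p.roots ≤ ((Sf.erase s).map e).val := by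
        rw [Finset.map_erase, Finset.erase_val]
        refine Multiset.le_iff_count.mpr fun a => ?_
        by_cases hac : a = e s
        · subst hac
          rw [Multiset.count_eq_zero_of_notMem hsnr]
          exact Nat.zero_le _
        · rw [Multiset.count_erase_of_ne hac]
          exact Multiset.le_iff_count.mp hrle a
      set Cm : Multiset (FractionRing R) := ((Sf.erase s).map e).val - p.roots with hCm
      have hCmadd : p.roots + Cm = ((Sf.erase s).map e).val := by
        rw [hCm, add_comm]
        exact tsub_add_cancel_of_le hrle2
      have heval : p.eval (ι s) = p.leadingCoeff * (p.roots.map (fun t => ι s - t)).prod := by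
        conv_lhs => rw [hpfact]
        rw [eval_mul, eval_C, eval_multiset_prod, Multiset.map_map]
        exact congrArg _ (congrArg Multiset.prod
          (Multiset.map_congr rfl fun t _ => by simp))
      have hfull : (p.roots.map (fun t => ι s - t)).prod * (Cm.map (fun t => ι s - t)).prod
          = ι (∏ b ∈ Sf.erase s, (s - b)) := by
        rw [← Multiset.prod_add, ← Multiset.map_add, hCmadd, map_prod,
          Finset.prod_eq_multiset_prod, Finset.map_val, Multiset.map_map]
        exact congrArg Multiset.prod
          (Multiset.map_congr rfl fun b _ => by simp [e, map_sub])
      have hCmmem : (Cm.map (fun t => ι s - t)).prod ∈ (algebraMap R (FractionRing R)).range := by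
        refine Subring.multiset_prod_mem _ _ fun a ha' => ?_
        obtain ⟨t, ht, rfl⟩ := Multiset.mem_map.mp ha'
        have ht2 : t ∈ ((Sf.erase s).map e).val := by
          refine Multiset.mem_of_le ?_ ht
          rw [hCm]
          exact tsub_le_self
        rw [Finset.map_val] at ht2
        obtain ⟨b, _, rfl⟩ := Multiset.mem_map.mp ht2
        exact ⟨s - b, by simp [map_sub, e]; rfl⟩
      have hDdec : D = (∏ b ∈ Sf.erase s, (s - b)) *
          ∏ a ∈ Sf.erase s, ∏ b ∈ Sf.erase a, (a - b) := by
        rw [hD]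
        exact (Finset.mul_prod_erase Sf _ hsSf).symm
      have hkey : p.leadingCoeff * ι D = p.eval (ι s) * (Cm.map (fun t => ι s - t)).prod *
          ι (∏ a ∈ Sf.erase s, ∏ b ∈ Sf.erase a, (a - b)) := by
        rw [heval, hDdec, map_mul, ← hfull]
        ring
      rw [hkey]
      exact mul_mem (mul_mem (π.2 s ((hSfS s).mp hsSf)) hCmmem) ⟨_, rfl⟩
  -- global assembly
  have hlc : (L.map leadingCoeff).prod = w⁻¹ := by
    rw [← leadingCoeff_multiset_prod, hLprod, hg, leadingCoeff_mul, leadingCoeff_C,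
      hfmonic.leadingCoeff, mul_one]
  have hdegsum : (L.map natDegree).sum = m := by
    rw [← natDegree_multiset_prod L hL0, hLprod, hgdeg]
  set k : ℕ := (L.map (fun p => if p.natDegree = 0 then 0 else 1)).sum with hk
  have hkm : k ≤ m := by
    rw [hk, ← hdegsum]
    refine Multiset.sum_map_le_sum_map _ _ fun p _ => ?_
    split
    · omega
    · omega
  have hP : (L.map (fun p => p.leadingCoeff * ι D ^ (if p.natDegree = 0 then 0 else 1))).prod
      ∈ (algebraMap R (FractionRing R)).range := by
    refine Subring.multiset_prod_mem _ _ fun a ha => ?_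
    obtain ⟨p, hp, rfl⟩ := Multiset.mem_map.mp ha
    exact key p hp
  have hPval : (L.map (fun p => p.leadingCoeff * ι D ^ (if p.natDegree = 0 then 0 else 1))).prod
      = w⁻¹ * ι D ^ k := by
    rw [Multiset.prod_map_mul, hlc, hk, multiset_prod_map_pow (ι D)
      (fun p : Polynomial (FractionRing R) => if p.natDegree = 0 then 0 else 1) L]
  have hfinal : (ι r)⁻¹ ∈ (algebraMap R (FractionRing R)).range := by
    have hDk : (ι D : FractionRing R) ^ (m - k) ∈ (algebraMap R (FractionRing R)).range :=
      ⟨D ^ (m - k), by rw [map_pow]⟩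
    have h1 := mul_mem hP hDk
    rw [hPval] at h1
    have h2 : w⁻¹ * ι D ^ k * ι D ^ (m - k) = (ι r)⁻¹ := by
      rw [mul_assoc, ← pow_add, Nat.add_sub_cancel' hkm, hw, mul_inv, mul_assoc,
        inv_mul_cancel₀ (pow_ne_zero _ hιD), mul_one]
    rwa [h2] at h1
  obtain ⟨u, hu⟩ := hfinal
  refine hru (IsUnit.of_mul_eq_one (a := r) u (hι ?_))
  rw [map_mul, map_one]
  show ι r * ι u = 1
  rw [hu, mul_inv_cancel₀ hιr]

end IntPolyAux

/-- For a nonempty finite `S ⊆ R`, the conditions UFD, FFD, BFD, atomic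
for `Int(S,R)`, and `R` being a field, are all equivalent. -/
theorem intPoly_finite_tfae
    (R : Type*) [CommRing R] [IsDomain R]
    (S : Set R) (hne : S.Nonempty) (hfin : S.Finite) :
    List.TFAE [UniqueFactorizationMonoid (IntPoly R S),
      IsFFD (IntPoly R S),
      IsBFD (IntPoly R S),
      IsAtomicDomain (IntPoly R S),
      IsField R] := by
  tfae_have 5 → 1
  | hF => by
    have hsurj : Function.Surjective (algebraMap R (FractionRing R)) := by
      intro z
      obtain ⟨x, y, hy, hxy⟩ := IsFractionRing.div_surjective (A := R) z
      have hy0 : y ≠ 0 := nonZeroDivisors.ne_zero hy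
      obtain ⟨b, hb⟩ := hF.mul_inv_cancel hy0
      refine ⟨x * b, ?_⟩
      have h1 : algebraMap R (FractionRing R) y * algebraMap R (FractionRing R) b = 1 := by
        rw [← map_mul, hb, map_one]
      have hy0' : algebraMap R (FractionRing R) y ≠ 0 := fun h => hy0
        (IsFractionRing.injective R (FractionRing R) (by rw [h, map_zero]))
      rw [map_mul, ← hxy, eq_div_iff hy0', mul_assoc, mul_comm (algebraMap R (FractionRing R) b),
        h1, mul_one]
    have htop : IntPoly R S = ⊤ := by
      refine Subring.ext fun p => ⟨fun _ => trivial, fun _ => ?_⟩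
      intro s hs
      exact hsurj _
    have e : (IntPoly R S) ≃+* Polynomial (FractionRing R) :=
      (RingEquiv.subringCongr htop).trans Subring.topEquiv
    exact MulEquiv.uniqueFactorizationMonoid e.symm.toMulEquiv inferInstance
  tfae_have 1 → 2
  | h => by
    haveI := h
    exact ⟨fun x hx hxu => ufd_isAtomic x hx hxu, fun x hx => ufd_finiteDvd hx⟩
  tfae_have 1 → 3
  | h => by
    haveI := h
    exact ⟨fun x hx hxu => ufd_isAtomic x hx hxu, fun x hx hxu => ufd_boundedLengths hx hxu⟩
  tfae_have 2 → 4
  | h => h.1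
  tfae_have 3 → 4
  | h => h.1
  tfae_have 4 → 5
  | h => by
    refine ⟨exists_pair_ne R, mul_comm, fun {a} ha => ?_⟩
    obtain ⟨b, hb⟩ := (atomic_isUnit S hne hfin h ha).exists_right_inv
    exact ⟨b, hb⟩
  tfae_finish
end

section
/- For an integral domain R, the ring Int(R) is a finite factorization domain if and only if R is a finite factorization domain. -/
open Polynomial

private lemma atomic_aux {A : Type*} [CommRing A] [IsDomain A]
    (hfin : ∀ x : A, x ≠ 0 → {y : Associates A | y ∣ Associates.mk x}.Finite) :
    ∀ x : A, x ≠ 0 → ¬IsUnit x →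
      ∃ l : Multiset A, (∀ a ∈ l, Irreducible a) ∧ l.prod = x := by
  have key : ∀ n : ℕ, ∀ x : A, ∀ hx : x ≠ 0, ¬IsUnit x →
      (hfin x hx).toFinset.card ≤ n →
      ∃ l : Multiset A, (∀ a ∈ l, Irreducible a) ∧ l.prod = x := by
    intro n
    induction n with
    | zero =>
      intro x hx hu hc
      exfalso
      have hmem : Associates.mk x ∈ (hfin x hx).toFinset := by
        simp [Set.Finite.mem_toFinset]
      have := Finset.card_pos.mpr ⟨_, hmem⟩
      omega
    | succ n ih =>
      intro x hx hu hc
      by_cases hirr : Irreducible x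
      · exact ⟨{x}, by simpa using hirr, by simp⟩
      · rw [irreducible_iff] at hirr
        push_neg at hirr
        obtain ⟨a, b, hab, ha, hb⟩ := hirr hu
        have ha0 : a ≠ 0 := by rintro rfl; exact hx (by simp [hab])
        have hb0 : b ≠ 0 := by rintro rfl; exact hx (by simp [hab])
        have hss : ∀ c d : A, ∀ hc0 : c ≠ 0, d ≠ 0 → ¬IsUnit d → x = c * d →
            (hfin c hc0).toFinset ⊂ (hfin x hx).toFinset := by
          intro c d hc0 hd0 hdu hcd
          rw [Finset.ssubset_iff_of_subset]
          · refine ⟨Associates.mk x, ?_, ?_⟩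
            · simp [Set.Finite.mem_toFinset]
            · simp only [Set.Finite.mem_toFinset, Set.mem_setOf_eq, Associates.mk_dvd_mk]
              intro hxc
              have hassoc : Associated c x := associated_of_dvd_dvd ⟨d, hcd⟩ hxc
              obtain ⟨u, hu⟩ := hassoc
              rw [hcd] at hu
              exact hdu ((mul_left_cancel₀ hc0 hu) ▸ u.isUnit)
          · intro y hy
            simp only [Set.Finite.mem_toFinset, Set.mem_setOf_eq] at hy ⊢
            exact hy.trans (Associates.mk_dvd_mk.mpr ⟨d, hcd⟩)
        obtain ⟨la, hla, hpa⟩ := ih a ha0 ha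
          (by have := Finset.card_lt_card (hss a b ha0 hb0 hb hab); omega)
        obtain ⟨lb, hlb, hpb⟩ := ih b hb0 hb
          (by have := Finset.card_lt_card (hss b a hb0 ha0 ha (by rw [hab, mul_comm])); omega)
        refine ⟨la + lb, ?_, by simp [hpa, hpb, hab]⟩
        intro z hz
        rcases Multiset.mem_add.mp hz with h | h
        exacts [hla z h, hlb z h]
  intro x hx hu
  exact key _ x hx hu le_rfl

private lemma monicDivisors_finite {K : Type*} [Field K] {F : Polynomial K} (hF : F ≠ 0) :
    {g : Polynomial K | g.Monic ∧ g ∣ F}.Finite := by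
  classical
  have hT : {M : Multiset (Polynomial K) |
      M ≤ UniqueFactorizationMonoid.normalizedFactors F}.Finite := by
    have : {M : Multiset (Polynomial K) |
        M ≤ UniqueFactorizationMonoid.normalizedFactors F}
        = {M | M ∈ (UniqueFactorizationMonoid.normalizedFactors F).powerset} := by
      ext M; simp [Multiset.mem_powerset]
    rw [this]
    exact (UniqueFactorizationMonoid.normalizedFactors F).powerset.finite_toSet
  refine Set.Finite.of_finite_image (f := fun g => UniqueFactorizationMonoid.normalizedFactors g)
    (hT.subset ?_) ?_
  · rintro M ⟨g, ⟨hg, hgF⟩, rfl⟩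
    exact (UniqueFactorizationMonoid.dvd_iff_normalizedFactors_le_normalizedFactors
      (hg.ne_zero) hF).mp hgF
  · rintro g ⟨hg, hgF⟩ g' ⟨hg', hgF'⟩ h
    have h1 := UniqueFactorizationMonoid.prod_normalizedFactors hg.ne_zero
    have h2 := UniqueFactorizationMonoid.prod_normalizedFactors hg'.ne_zero
    simp only at h
    rw [h] at h1
    exact Polynomial.eq_of_monic_of_associated hg hg' (h1.symm.trans h2)

section Aux

variable (R : Type*) [CommRing R] [IsDomain R]

private lemma mem_intPoly_iff {p : Polynomial (FractionRing R)} :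
    p ∈ IntPoly R Set.univ ↔ ∀ s : R,
      p.eval (algebraMap R (FractionRing R) s) ∈ (algebraMap R (FractionRing R)).range := by
  constructor
  · intro h s; exact h s (Set.mem_univ s)
  · intro h s _; exact h s

private noncomputable def constHom : R →+* (IntPoly R Set.univ) :=
  RingHom.codRestrict ((Polynomial.C : _ →+* Polynomial (FractionRing R)).comp
    (algebraMap R (FractionRing R))) (IntPoly R Set.univ)
    (fun r => by
      rw [mem_intPoly_iff]
      intro s
      simpa using ⟨r, rfl⟩)

@[simp] private lemma constHom_coe (r : R) :
    ((constHom R r : IntPoly R Set.univ) : Polynomial (FractionRing R))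
      = Polynomial.C (algebraMap R (FractionRing R) r) := rfl

private lemma exists_of_isUnit {g : (IntPoly R Set.univ)} (h : IsUnit g) :
    ∃ r : R, IsUnit r ∧ (g : Polynomial (FractionRing R))
      = Polynomial.C (algebraMap R (FractionRing R) r) := by
  obtain ⟨u, rfl⟩ := h
  have h1 : ((u : IntPoly R Set.univ) : Polynomial (FractionRing R))
      * (((u⁻¹ : _ˣ) : IntPoly R Set.univ) : Polynomial (FractionRing R)) = 1 := by
    have := u.mul_inv
    have := congrArg (fun z : IntPoly R Set.univ => (z : Polynomial (FractionRing R))) this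
    push_cast at this
    simpa using this
  obtain ⟨c, hcu, hc⟩ := Polynomial.isUnit_iff.mp (IsUnit.of_mul_eq_one _ h1)
  obtain ⟨d, hdu, hd⟩ := Polynomial.isUnit_iff.mp
    (IsUnit.of_mul_eq_one _ (by rw [mul_comm] at h1; exact h1))
  have hcd : c * d = 1 := by
    have : Polynomial.C (c * d) = Polynomial.C (1 : FractionRing R) := by
      rw [map_mul, hc, hd, h1, map_one]
    exact Polynomial.C_injective this
  obtain ⟨rc, hrc⟩ := (mem_intPoly_iff R).mp (u : IntPoly R Set.univ).2 0
  obtain ⟨rd, hrd⟩ := (mem_intPoly_iff R).mp ((u⁻¹ : _ˣ) : IntPoly R Set.univ).2 0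
  rw [← hc] at hrc
  rw [← hd] at hrd
  simp only [Polynomial.eval_C] at hrc hrd
  refine ⟨rc, ?_, by rw [← hc, hrc]⟩
  refine IsUnit.of_mul_eq_one rd ?_
  have : algebraMap R (FractionRing R) (rc * rd) = algebraMap R (FractionRing R) 1 := by
    rw [map_mul, hrc, hrd, hcd, map_one]
  exact IsFractionRing.injective R (FractionRing R) this

private lemma assoc_of_assoc_const {a b : R}
    (h : Associated (constHom R a) (constHom R b)) : Associated a b := by
  obtain ⟨u, hu⟩ := h
  obtain ⟨w, hwu, hwc⟩ := exists_of_isUnit R u.isUnit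
  have : Polynomial.C (algebraMap R (FractionRing R) (a * w))
      = Polynomial.C (algebraMap R (FractionRing R) b) := by
    have := congrArg (fun z : IntPoly R Set.univ => (z : Polynomial (FractionRing R))) hu
    push_cast at this
    rw [constHom_coe, constHom_coe, hwc] at this
    rw [map_mul, map_mul]
    exact this
  have hab : a * w = b :=
    IsFractionRing.injective R (FractionRing R) (Polynomial.C_injective this)
  exact ⟨hwu.unit, by rw [IsUnit.unit_spec]; exact hab⟩

end Aux

private lemma ffd_forward (R : Type*) [CommRing R] [IsDomain R]
    (hfin : ∀ x : IntPoly R Set.univ, x ≠ 0 →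
      {y : Associates (IntPoly R Set.univ) | y ∣ Associates.mk x}.Finite) :
    ∀ r : R, r ≠ 0 → {y : Associates R | y ∣ Associates.mk r}.Finite := by
  intro r hr
  have hcr : constHom R r ≠ 0 := by
    intro h
    apply hr
    have := congrArg (fun z : IntPoly R Set.univ => (z : Polynomial (FractionRing R))) h
    simp only [constHom_coe] at this
    push_cast at this
    have : algebraMap R (FractionRing R) r = 0 := by
      simpa using (Polynomial.C_injective (by simpa using this) : _)
    exact IsFractionRing.injective R (FractionRing R) (by simpa using this)
  refine Set.Finite.of_finite_image
    (f := fun y => Associates.mk (constHom R (Quot.out y)))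
    (Set.Finite.subset (hfin (constHom R r) hcr) ?_) ?_
  · rintro z ⟨y, hy, rfl⟩
    simp only [Set.mem_setOf_eq] at hy ⊢
    rw [Associates.mk_dvd_mk]
    have : Quot.out y ∣ r := by
      rw [← Associates.mk_dvd_mk, Associates.quot_out]
      exact hy
    exact map_dvd _ this
  · intro y _ y' _ h
    have := assoc_of_assoc_const R (Associates.mk_eq_mk_iff_associated.mp h)
    rw [← Associates.quot_out y, ← Associates.quot_out y']
    exact Associates.mk_eq_mk_iff_associated.mpr this

private lemma field_aux {F : Type*} [Field F] (x y z w : F) (hz : z ≠ 0) (h : y * x = z) :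
    x * (y * (z * w⁻¹)⁻¹) = w := by
  rw [mul_inv, inv_inv]
  calc x * (y * (z⁻¹ * w)) = y * x * z⁻¹ * w := by ring
    _ = z * z⁻¹ * w := by rw [h]
    _ = w := by rw [mul_inv_cancel₀ hz, one_mul]

set_option maxHeartbeats 1000000 in
private lemma ffd_backward (R : Type*) [CommRing R] [IsDomain R]
    (hfin : ∀ r : R, r ≠ 0 → {y : Associates R | y ∣ Associates.mk r}.Finite) :
    ∀ f : IntPoly R Set.univ, f ≠ 0 →
      {y : Associates (IntPoly R Set.univ) | y ∣ Associates.mk f}.Finite := by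
  intro f hf
  have hφinj : Function.Injective (algebraMap R (FractionRing R)) := IsFractionRing.injective R (FractionRing R)
  have hF : (f : Polynomial (FractionRing R)) ≠ 0 := fun h => hf (Subtype.ext h)
  have hMD : {g : Polynomial (FractionRing R) | g.Monic ∧ g ∣ (f : Polynomial (FractionRing R))}.Finite :=
    monicDivisors_finite hF
  rcases finite_or_infinite R with hRfin | hRinf
  · -- R finite, hence a field
    have hfield := Finite.isField_of_domain R
    have hsurj : Function.Surjective (algebraMap R (FractionRing R)) := by
      intro z
      obtain ⟨a, b, hb, hz⟩ := IsFractionRing.div_surjective (A := R) (K := FractionRing R) z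
      have hb0 : b ≠ 0 := nonZeroDivisors.ne_zero hb
      obtain ⟨c, hc⟩ := hfield.mul_inv_cancel hb0
      refine ⟨a * c, ?_⟩
      have hφb : (algebraMap R (FractionRing R)) b ≠ 0 := fun h0 => hb0 (hφinj (by simpa using h0))
      rw [← hz, eq_div_iff hφb, ← map_mul, mul_assoc, mul_comm c b, hc, mul_one]
    have hunit : ∀ c : FractionRing R, c ≠ 0 → ∃ w : (IntPoly R Set.univ)ˣ,
        ((w : IntPoly R Set.univ) : Polynomial (FractionRing R)) = Polynomial.C c := by
      intro c hc
      obtain ⟨r, rfl⟩ := hsurj c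
      obtain ⟨r', hr'⟩ := hsurj ((algebraMap R (FractionRing R)) r)⁻¹
      have hrr' : r * r' = 1 := hφinj (by rw [map_mul, hr', map_one, mul_inv_cancel₀ hc])
      have hIs : IsUnit (constHom R r) := (IsUnit.of_mul_eq_one r' hrr').map (constHom R)
      refine ⟨hIs.unit, ?_⟩
      rw [IsUnit.unit_spec]
      rfl
    set B' : Set (IntPoly R Set.univ) :=
      (fun h : IntPoly R Set.univ => (h : Polynomial (FractionRing R))) ⁻¹'
        {g : Polynomial (FractionRing R) | g.Monic ∧ g ∣ (f : Polynomial (FractionRing R))} with hB'def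
    have hB' : B'.Finite := Set.Finite.preimage (Subtype.coe_injective.injOn) hMD
    refine Set.Finite.subset (hB'.image Associates.mk) ?_
    intro y hy
    obtain ⟨g, rfl⟩ := Associates.mk_surjective y
    rw [Set.mem_setOf_eq, Associates.mk_dvd_mk] at hy
    obtain ⟨h, hgh⟩ := hy
    have hFGH : (f : Polynomial (FractionRing R)) = (g : Polynomial (FractionRing R)) * (h : Polynomial (FractionRing R)) := by
      exact_mod_cast congrArg (fun z : IntPoly R Set.univ => (z : Polynomial (FractionRing R))) hgh
    have hg0 : g ≠ 0 := by rintro rfl; exact hf (by rw [hgh, zero_mul])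
    have hG0 : (g : Polynomial (FractionRing R)) ≠ 0 := fun h0 => hg0 (Subtype.ext h0)
    set c := (g : Polynomial (FractionRing R)).leadingCoeff with hcdef
    have hc0 : c ≠ 0 := Polynomial.leadingCoeff_ne_zero.mpr hG0
    set m := (g : Polynomial (FractionRing R)) * Polynomial.C c⁻¹ with hmdef
    have hmono : m.Monic := Polynomial.monic_mul_leadingCoeff_inv hG0
    have hGm : (g : Polynomial (FractionRing R)) = m * Polynomial.C c := by
      rw [hmdef, mul_assoc, ← map_mul, inv_mul_cancel₀ hc0, map_one, mul_one]
    have hmF : m ∣ (f : Polynomial (FractionRing R)) :=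
      ⟨Polynomial.C c * (h : Polynomial (FractionRing R)), by rw [hFGH, hGm]; ring⟩
    have hmem : m ∈ IntPoly R Set.univ := by
      rw [mem_intPoly_iff]
      intro s
      exact hsurj (m.eval ((algebraMap R (FractionRing R)) s))
    obtain ⟨w, hw⟩ := hunit c hc0
    refine ⟨⟨m, hmem⟩, ⟨hmono, hmF⟩, ?_⟩
    rw [Associates.mk_eq_mk_iff_associated]
    refine ⟨w, Subtype.ext ?_⟩
    show m * ((w : IntPoly R Set.univ) : Polynomial (FractionRing R)) = (g : Polynomial (FractionRing R))
    rw [hw, ← hGm]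
  · -- R infinite
    have hroots : {s : R | ((f : Polynomial (FractionRing R))).IsRoot ((algebraMap R (FractionRing R)) s)}.Finite :=
      Set.Finite.preimage hφinj.injOn (Polynomial.finite_setOf_isRoot hF)
    obtain ⟨s0, hs0⟩ := (hroots.infinite_compl).nonempty
    have hFs0 : (f : Polynomial (FractionRing R)).eval ((algebraMap R (FractionRing R)) s0) ≠ 0 := by simpa using hs0
    obtain ⟨r0, hr0⟩ := (mem_intPoly_iff R).mp f.2 s0
    have hr00 : r0 ≠ 0 := by
      intro h0; apply hFs0; rw [← hr0, h0, map_zero]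
    have hDrep : (Quot.out '' {y : Associates R | y ∣ Associates.mk r0}).Finite :=
      (hfin r0 hr00).image _
    set B : Set (Polynomial (FractionRing R)) := (fun p : R × Polynomial (FractionRing R) =>
      Polynomial.C ((algebraMap R (FractionRing R)) p.1 * (p.2.eval ((algebraMap R (FractionRing R)) s0))⁻¹) * p.2) ''
      ((Quot.out '' {y : Associates R | y ∣ Associates.mk r0}) ×ˢ
        {g : Polynomial (FractionRing R) | g.Monic ∧ g ∣ (f : Polynomial (FractionRing R))}) with hBdef
    have hB : B.Finite := (hDrep.prod hMD).image _
    set B' : Set (IntPoly R Set.univ) :=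
      (fun h : IntPoly R Set.univ => (h : Polynomial (FractionRing R))) ⁻¹' B with hB'def
    have hB' : B'.Finite := Set.Finite.preimage (Subtype.coe_injective.injOn) hB
    refine Set.Finite.subset (hB'.image Associates.mk) ?_
    intro y hy
    obtain ⟨g, rfl⟩ := Associates.mk_surjective y
    rw [Set.mem_setOf_eq, Associates.mk_dvd_mk] at hy
    obtain ⟨h, hgh⟩ := hy
    have hFGH : (f : Polynomial (FractionRing R)) = (g : Polynomial (FractionRing R)) * (h : Polynomial (FractionRing R)) := by
      exact_mod_cast congrArg (fun z : IntPoly R Set.univ => (z : Polynomial (FractionRing R))) hgh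
    have hg0 : g ≠ 0 := by rintro rfl; exact hf (by rw [hgh, zero_mul])
    have hG0 : (g : Polynomial (FractionRing R)) ≠ 0 := fun h0 => hg0 (Subtype.ext h0)
    set c := (g : Polynomial (FractionRing R)).leadingCoeff with hcdef
    have hc0 : c ≠ 0 := Polynomial.leadingCoeff_ne_zero.mpr hG0
    set m := (g : Polynomial (FractionRing R)) * Polynomial.C c⁻¹ with hmdef
    have hmono : m.Monic := Polynomial.monic_mul_leadingCoeff_inv hG0
    have hGm : (g : Polynomial (FractionRing R)) = m * Polynomial.C c := by
      rw [hmdef, mul_assoc, ← map_mul, inv_mul_cancel₀ hc0, map_one, mul_one]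
    have hmF : m ∣ (f : Polynomial (FractionRing R)) :=
      ⟨Polynomial.C c * (h : Polynomial (FractionRing R)), by rw [hFGH, hGm]; ring⟩
    have hevalmul : (g : Polynomial (FractionRing R)).eval ((algebraMap R (FractionRing R)) s0) * (h : Polynomial (FractionRing R)).eval ((algebraMap R (FractionRing R)) s0)
        = (f : Polynomial (FractionRing R)).eval ((algebraMap R (FractionRing R)) s0) := by rw [hFGH, Polynomial.eval_mul]
    have hα0 : (g : Polynomial (FractionRing R)).eval ((algebraMap R (FractionRing R)) s0) ≠ 0 :=
      fun h0 => hFs0 (by rw [← hevalmul, h0, zero_mul])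
    obtain ⟨a, ha⟩ := (mem_intPoly_iff R).mp g.2 s0
    obtain ⟨b, hb⟩ := (mem_intPoly_iff R).mp h.2 s0
    have hab : a * b = r0 := hφinj (by rw [map_mul, ha, hb, hevalmul, hr0])
    have hφa0 : (algebraMap R (FractionRing R)) a ≠ 0 := by rw [ha]; exact hα0
    set a' := Quot.out (Associates.mk a) with ha'def
    have ha'mem : a' ∈ Quot.out '' {y : Associates R | y ∣ Associates.mk r0} :=
      ⟨Associates.mk a, Associates.mk_dvd_mk.mpr ⟨b, hab.symm⟩, rfl⟩
    have ha'a : Associated a' a := Associates.mk_quot_out a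
    obtain ⟨u, hu⟩ := ha'a
    have hevalm : m.eval ((algebraMap R (FractionRing R)) s0) = (algebraMap R (FractionRing R)) a * c⁻¹ := by
      rw [hmdef, Polynomial.eval_mul, Polynomial.eval_C, ha]
    set h₀ := Polynomial.C ((algebraMap R (FractionRing R)) a' * (m.eval ((algebraMap R (FractionRing R)) s0))⁻¹) * m with hh₀
    have hBmem : h₀ ∈ B := ⟨(a', m), ⟨ha'mem, ⟨hmono, hmF⟩⟩, rfl⟩
    have hscal : (algebraMap R (FractionRing R)) ↑u * ((algebraMap R (FractionRing R)) a' * (m.eval ((algebraMap R (FractionRing R)) s0))⁻¹) = c := by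
      have h1 : (algebraMap R (FractionRing R)) a' * (algebraMap R (FractionRing R)) ↑u
          = (algebraMap R (FractionRing R)) a := by rw [← map_mul, hu]
      rw [hevalm]
      exact field_aux ((algebraMap R (FractionRing R)) ↑u) ((algebraMap R (FractionRing R)) a')
        ((algebraMap R (FractionRing R)) a) c hφa0 h1
    have key : Polynomial.C ((algebraMap R (FractionRing R)) ↑u) * h₀ = (g : Polynomial (FractionRing R)) := by
      rw [hh₀, ← mul_assoc, ← map_mul, hscal, hGm]
      ring
    have hh₀mem : h₀ ∈ IntPoly R Set.univ := by
      have hginv : Polynomial.C ((algebraMap R (FractionRing R)) ((u⁻¹ : Rˣ) : R)) * (g : Polynomial (FractionRing R)) = h₀ := by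
        rw [← key, ← mul_assoc, ← map_mul, ← map_mul, Units.inv_mul, map_one, map_one, one_mul]
      rw [← hginv]
      exact mul_mem (constHom R ((u⁻¹ : Rˣ) : R)).2 g.2
    refine ⟨⟨h₀, hh₀mem⟩, hBmem, ?_⟩
    rw [Associates.mk_eq_mk_iff_associated]
    have hUnit : IsUnit (constHom R (↑u : R)) := (u.isUnit).map (constHom R)
    refine ⟨hUnit.unit, Subtype.ext ?_⟩
    have hcoe : ((hUnit.unit : IntPoly R Set.univ) : Polynomial (FractionRing R)) = Polynomial.C ((algebraMap R (FractionRing R)) ↑u) := by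
      rw [IsUnit.unit_spec]; rfl
    show h₀ * ((hUnit.unit : IntPoly R Set.univ) : Polynomial (FractionRing R)) = (g : Polynomial (FractionRing R))
    rw [hcoe, mul_comm, key]

/-- `Int(R)` is an FFD iff `R` is an FFD. -/
theorem intPoly_isFFD_iff
    (R : Type*) [CommRing R] [IsDomain R] :
    IsFFD (IntPoly R Set.univ) ↔ IsFFD R := by
  constructor
  · rintro ⟨-, hfin⟩
    have h := ffd_forward R hfin
    exact ⟨atomic_aux h, h⟩
  · rintro ⟨-, hfin⟩
    have h := ffd_backward R hfin
    exact ⟨atomic_aux h, h⟩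
end

section
/- Let R be an integral domain and let S be a nonempty subset of R. Then Int(S,R) is a Furstenberg domain if and only if R is a Furstenberg domain. -/
open Polynomial

section Aux

variable {R : Type*} [CommRing R] [IsDomain R] {S : Set R}

lemma IntPoly.mem_iff {p : Polynomial (FractionRing R)} :
    p ∈ IntPoly R S ↔ ∀ s ∈ S, p.eval (algebraMap R (FractionRing R) s)
      ∈ (algebraMap R (FractionRing R)).range := Iff.rfl

lemma cst_mem (S : Set R) (c : R) : (C (algebraMap R (FractionRing R) c)) ∈ IntPoly R S := by
  intro s hs
  simpa using RingHom.mem_range_self _ c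

/-- The constant polynomial with value `c : R`, as element of `IntPoly R S`. -/
noncomputable def cst (S : Set R) (c : R) : IntPoly R S :=
  ⟨C (algebraMap R (FractionRing R) c), cst_mem S c⟩

lemma cst_mul (S : Set R) (a b : R) : cst S (a * b) = cst S a * cst S b :=
  Subtype.ext (by simp [cst, map_mul])

lemma cst_one (S : Set R) : cst S 1 = 1 := Subtype.ext (by simp [cst])

lemma cst_inj {S : Set R} {a b : R} (h : cst S a = cst S b) : a = b := by
  have := congrArg Subtype.val h
  simp only [cst, C_inj] at this
  exact IsFractionRing.injective R (FractionRing R) this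

/-- A `natDegree`-0 element of `IntPoly R S` is a constant from `R` (needs `S` nonempty). -/
lemma eq_cst_of_natDegree_eq_zero (hS : S.Nonempty) (p : IntPoly R S)
    (h0 : (p : Polynomial (FractionRing R)).natDegree = 0) : ∃ c : R, p = cst S c := by
  obtain ⟨s₀, hs₀⟩ := hS
  have hp : (p : Polynomial (FractionRing R)) = C ((p : Polynomial (FractionRing R)).coeff 0) :=
    Polynomial.eq_C_of_natDegree_eq_zero h0
  obtain ⟨c, hc⟩ := p.2 s₀ hs₀
  refine ⟨c, Subtype.ext ?_⟩
  rw [show ((cst S c : IntPoly R S) : Polynomial (FractionRing R))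
    = C (algebraMap R (FractionRing R) c) from rfl, hp] at *
  rw [hp]
  congr 1
  rw [hp] at hc
  simpa using hc.symm

lemma isUnit_cst_iff (hS : S.Nonempty) (c : R) : IsUnit (cst S c) ↔ IsUnit c := by
  obtain ⟨s₀, hs₀⟩ := hS
  constructor
  · rintro h
    obtain ⟨q, hq⟩ := isUnit_iff_exists_inv.mp h
    have hq' : C (algebraMap R (FractionRing R) c) * (q : Polynomial (FractionRing R)) = 1 :=
      congrArg Subtype.val hq
    obtain ⟨u, hu⟩ := q.2 s₀ hs₀
    have := congrArg (Polynomial.eval (algebraMap R (FractionRing R) s₀)) hq'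
    rw [eval_mul, eval_C, eval_one, ← hu, ← map_mul, ← map_one (algebraMap R (FractionRing R))]
      at this
    exact IsUnit.of_mul_eq_one _ (IsFractionRing.injective R (FractionRing R) this)
  · rintro ⟨u, rfl⟩
    refine IsUnit.of_mul_eq_one (cst S (↑u⁻¹)) ?_
    rw [← cst_mul, Units.mul_inv, cst_one]

lemma irreducible_cst_iff (hS : S.Nonempty) (c : R) : Irreducible (cst S c) ↔ Irreducible c := by
  constructor
  · intro h
    refine ⟨fun hu => h.not_isUnit ((isUnit_cst_iff hS c).mpr hu), fun a b hab => ?_⟩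
    have : cst S c = cst S a * cst S b := by rw [← cst_mul, ← hab]
    rcases h.isUnit_or_isUnit this with h' | h'
    · exact Or.inl ((isUnit_cst_iff hS a).mp h')
    · exact Or.inr ((isUnit_cst_iff hS b).mp h')
  · intro h
    refine ⟨fun hu => h.not_isUnit ((isUnit_cst_iff hS c).mp hu), fun a b hab => ?_⟩
    have hab' : C (algebraMap R (FractionRing R) c)
        = (a : Polynomial (FractionRing R)) * (b : Polynomial (FractionRing R)) :=
      congrArg Subtype.val hab
    have hc0 : algebraMap R (FractionRing R) c ≠ 0 := by
      simpa using (map_ne_zero_iff _ (IsFractionRing.injective R (FractionRing R))).mpr h.ne_zero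
    have ha0 : (a : Polynomial (FractionRing R)) ≠ 0 := by
      intro h'; rw [h', zero_mul] at hab'; exact hc0 (by simpa using hab')
    have hb0 : (b : Polynomial (FractionRing R)) ≠ 0 := by
      intro h'; rw [h', mul_zero] at hab'; exact hc0 (by simpa using hab')
    have hdeg : (a : Polynomial (FractionRing R)).natDegree
        + (b : Polynomial (FractionRing R)).natDegree = 0 := by
      rw [← Polynomial.natDegree_mul ha0 hb0, ← hab', natDegree_C]
    obtain ⟨a', ha'⟩ := eq_cst_of_natDegree_eq_zero hS a (Nat.eq_zero_of_add_eq_zero_right hdeg)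
    obtain ⟨b', hb'⟩ := eq_cst_of_natDegree_eq_zero hS b (Nat.eq_zero_of_add_eq_zero_left hdeg)
    have : c = a' * b' := by
      apply cst_inj (S := S)
      rw [cst_mul, ← ha', ← hb', ← hab]
    rcases h.isUnit_or_isUnit this with h' | h'
    · exact Or.inl (by rw [ha']; exact (isUnit_cst_iff hS a').mpr h')
    · exact Or.inr (by rw [hb']; exact (isUnit_cst_iff hS b').mpr h')

end Aux

/-- For a nonempty `S ⊆ R`, `Int(S,R)` is a Furstenberg domain iff `R`
is a Furstenberg domain. -/
theorem intPoly_isFurstenberg_iff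
    (R : Type*) [CommRing R] [IsDomain R] (S : Set R) (hS : S.Nonempty) :
    IsFurstenberg (IntPoly R S) ↔ IsFurstenberg R := by


  constructor
  · -- `Int(S,R)` Furstenberg implies `R` Furstenberg
    intro h r hr0 hru
    have hF0 : cst S r ≠ 0 := by
      intro h'
      exact hr0 (cst_inj (S := S) (by rw [h']; exact (Subtype.ext (by simp [cst])).symm))
    obtain ⟨q, hqirr, t, ht⟩ := h (cst S r) hF0 (fun h' => hru ((isUnit_cst_iff hS r).mp h'))
    have ht' : C (algebraMap R (FractionRing R) r)
        = (q : Polynomial (FractionRing R)) * (t : Polynomial (FractionRing R)) :=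
      congrArg Subtype.val ht
    have hr0' : algebraMap R (FractionRing R) r ≠ 0 :=
      (map_ne_zero_iff _ (IsFractionRing.injective R (FractionRing R))).mpr hr0
    have hq0 : (q : Polynomial (FractionRing R)) ≠ 0 := by
      intro h'; rw [h', zero_mul] at ht'; exact hr0' (by simpa using ht')
    have ht0 : (t : Polynomial (FractionRing R)) ≠ 0 := by
      intro h'; rw [h', mul_zero] at ht'; exact hr0' (by simpa using ht')
    have hdeg : (q : Polynomial (FractionRing R)).natDegree
        + (t : Polynomial (FractionRing R)).natDegree = 0 := by
      rw [← Polynomial.natDegree_mul hq0 ht0, ← ht', natDegree_C]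
    obtain ⟨c, hc⟩ := eq_cst_of_natDegree_eq_zero hS q (Nat.eq_zero_of_add_eq_zero_right hdeg)
    obtain ⟨e, he⟩ := eq_cst_of_natDegree_eq_zero hS t (Nat.eq_zero_of_add_eq_zero_left hdeg)
    refine ⟨c, (irreducible_cst_iff hS c).mp (hc ▸ hqirr), e, ?_⟩
    apply cst_inj (S := S)
    rw [cst_mul, ← hc, ← he, ht]
  · -- `R` Furstenberg implies `Int(S,R)` Furstenberg
    intro h f hf0 hfu
    by_cases hA : ∃ d : IntPoly R S, d ∣ f ∧ ¬IsUnit d ∧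
        (d : Polynomial (FractionRing R)).natDegree = 0
    · -- there is a constant nonunit divisor: use Furstenberg property of `R`
      obtain ⟨d, hdf, hdu, hdeg⟩ := hA
      obtain ⟨c, hc⟩ := eq_cst_of_natDegree_eq_zero hS d hdeg
      have hc0 : c ≠ 0 := by
        rintro rfl
        apply hf0
        rw [hc] at hdf
        have : cst S (0 : R) = 0 := Subtype.ext (by simp [cst])
        rw [this] at hdf
        exact (zero_dvd_iff).mp hdf
      obtain ⟨p, hpirr, e, hce⟩ := h c hc0 (fun h' => hdu (hc ▸ (isUnit_cst_iff hS c).mpr h'))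
      refine ⟨cst S p, (irreducible_cst_iff hS p).mpr hpirr, dvd_trans ⟨cst S e, ?_⟩ hdf⟩
      rw [hc, hce, cst_mul]
    · -- no constant nonunit divisor: a nonunit divisor of minimal degree is irreducible
      push_neg at hA
      haveI : DecidablePred fun n : ℕ => ∃ g : IntPoly R S, g ∣ f ∧ ¬IsUnit g ∧
          (g : Polynomial (FractionRing R)).natDegree = n :=
        fun _ => Classical.propDecidable _
      have hP : ∃ n : ℕ, ∃ g : IntPoly R S, g ∣ f ∧ ¬IsUnit g ∧
          (g : Polynomial (FractionRing R)).natDegree = n :=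
        ⟨_, f, dvd_rfl, hfu, rfl⟩
      obtain ⟨g, hgf, hgu, hgdeg⟩ := Nat.find_spec hP
      refine ⟨g, ⟨hgu, fun a b hab => ?_⟩, hgf⟩
      by_contra hcon
      push_neg at hcon
      have haf : a ∣ f := dvd_trans ⟨b, hab⟩ hgf
      have hbf : b ∣ f := dvd_trans ⟨a, by rw [hab, mul_comm]⟩ hgf
      have hg0 : (g : Polynomial (FractionRing R)) ≠ 0 := by
        intro h'
        exact hf0 (zero_dvd_iff.mp (by rwa [show g = 0 from Subtype.ext h'] at hgf))
      have hab' : (g : Polynomial (FractionRing R))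
          = (a : Polynomial (FractionRing R)) * (b : Polynomial (FractionRing R)) :=
        congrArg Subtype.val hab
      have ha0 : (a : Polynomial (FractionRing R)) ≠ 0 := by
        intro h'; rw [h', zero_mul] at hab'; exact hg0 hab'
      have hb0 : (b : Polynomial (FractionRing R)) ≠ 0 := by
        intro h'; rw [h', mul_zero] at hab'; exact hg0 hab'
      have hdeg : (a : Polynomial (FractionRing R)).natDegree
          + (b : Polynomial (FractionRing R)).natDegree = Nat.find hP := by
        rw [← Polynomial.natDegree_mul ha0 hb0, ← hab', hgdeg]
      have hb1 : 1 ≤ (b : Polynomial (FractionRing R)).natDegree :=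
        Nat.one_le_iff_ne_zero.mpr (hA b hbf hcon.2)
      have halt : (a : Polynomial (FractionRing R)).natDegree < Nat.find hP := by omega
      exact Nat.find_min hP halt ⟨a, haf, hcon.1, rfl⟩
end
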